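/- arXiv:dg-ga/9701009 — 2 statements merged into one kernel-verified Lean document; each statement's English description precedes it below -/
import Mathlib

section
/- Let V be a finite-dimensional real vector space with full-rank lattice L, and let L* ⊂ V* be the dual lattice. Let C ⊂ V be a nonempty open proper cone with dual cone C* = {ξ ∈ V* : ⟨ξ, x⟩ > 0 for all x ∈ C \ {0}}. Then for every ξ ∈ C* ∩ L* there exists v ∈ C ∩ L such that the affine hyperplane ξ + v^⊥ = {λ ∈ V* : ⟨λ − ξ, v⟩ = 0} intersects C* ∩ L* only in the point ξ. -/
/-!
Pick a lattice point `v₁` in `C` with `closedBall v₁ r ⊆ C`. Every `l` that is nonnegative on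
`C` satisfies `|l u| * r ≤ l v₁ * ‖u‖`, so the dual-lattice points of the slice
`{l ∈ C* : l v₁ ≤ 3 ξ v₁}` are finitely many. For `y` within `r / 2` of `v₁`, the value `l y`
lies between `l v₁ / 2` and `3 l v₁ / 2`; hence any `l ∈ C* ∩ L*` with `l y = ξ y` lies in that
slice. Choosing `y` off the finitely many hyperplanes `ker (l - ξ)`, `l ≠ ξ`, and scaling it to a
lattice point `v = t • y` gives the result.
-/

open Module Set Metric

section

variable {V : Type*} [NormedAddCommGroup V] [NormedSpace ℝ V] {ι : Type*} [Fintype ι]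

lemma exists_pos_smul_mem_span_int (b : Basis ι ℝ V) {U : Set V} (hU : IsOpen U)
    (hne : U.Nonempty) : ∃ y ∈ U, ∃ t : ℝ, 0 < t ∧ t • y ∈ Submodule.span ℤ (range b) := by
  obtain ⟨p, hp⟩ := hne
  obtain ⟨ε, hε, hball⟩ := Metric.isOpen_iff.1 hU p hp
  set R := ∑ i, ‖b i‖
  have hR : 0 ≤ R := by positivity
  set t := (R + 1) / ε
  have ht : 0 < t := by positivity
  set q : V := (ZSpan.floor b (t • p) : V)
  refine ⟨t⁻¹ • q, hball ?_, t, ht, by rw [smul_inv_smul₀ ht.ne']; exact (ZSpan.floor b _).2⟩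
  have hdist : t⁻¹ • q - p = -(t⁻¹ • ZSpan.fract b (t • p)) := by
    rw [ZSpan.fract_apply, smul_sub, inv_smul_smul₀ ht.ne']
    abel
  rw [mem_ball, dist_eq_norm, hdist, norm_neg, norm_smul_of_nonneg (inv_nonneg.2 ht.le)]
  calc t⁻¹ * ‖ZSpan.fract b (t • p)‖ ≤ t⁻¹ * R := by gcongr; exact ZSpan.norm_fract_le b _
    _ < t⁻¹ * (R + 1) := by gcongr; linarith
    _ = ε := by simp only [t]; field_simp

lemma abs_apply_mul_le_of_closedBall_subset {C : Set V} {l : Dual ℝ V} (hl : ∀ x ∈ C, 0 ≤ l x)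
    {v : V} {r : ℝ} (hr : 0 ≤ r) (hv : closedBall v r ⊆ C) (u : V) :
    |l u| * r ≤ l v * ‖u‖ := by
  rcases eq_or_ne u 0 with rfl | hu
  · simp
  have hu' : 0 < ‖u‖ := norm_pos_iff.2 hu
  set w := (r / ‖u‖) • u
  have hw : ‖w‖ = r := by rw [norm_smul_of_nonneg (by positivity), div_mul_cancel₀ _ hu'.ne']
  have hpos : 0 ≤ l (v + w) := hl _ (hv (by simp [hw]))
  have hneg : 0 ≤ l (v - w) := hl _ (hv (by simp [hw]))
  have hlw : |l w| ≤ l v := by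
    rw [map_add] at hpos
    rw [map_sub] at hneg
    exact abs_le.2 ⟨by linarith, by linarith⟩
  rw [map_smul, smul_eq_mul, abs_mul, abs_of_nonneg (by positivity)] at hlw
  calc |l u| * r = r / ‖u‖ * |l u| * ‖u‖ := by field_simp
    _ ≤ l v * ‖u‖ := by gcongr

lemma abs_apply_sub_le_half_of_mem_ball {C : Set V} {l : Dual ℝ V} (hl : ∀ x ∈ C, 0 ≤ l x)
    {v y : V} {r : ℝ} (hv : closedBall v r ⊆ C) (hy : y ∈ ball v (r / 2)) :
    |l y - l v| ≤ l v / 2 := by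
  have hr : 0 < r := by linarith [dist_nonneg.trans_lt (mem_ball.1 hy)]
  have h := abs_apply_mul_le_of_closedBall_subset hl hr.le hv (y - v)
  rw [map_sub] at h
  have hyv : ‖y - v‖ * 2 < r := by rw [← dist_eq_norm]; linarith [mem_ball.1 hy]
  rw [le_div_iff₀ two_pos]
  nlinarith [hl v (hv (mem_closedBall_self hr.le)), abs_nonneg (l y - l v)]

lemma finite_setOf_dualLattice_of_abs_apply_le (b : Basis ι ℝ V) (B : ι → ℝ) :
    {l : Dual ℝ V | (∀ w ∈ Submodule.span ℤ (range b), ∃ n : ℤ, l w = n) ∧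
      ∀ i, |l (b i)| ≤ B i}.Finite := by
  classical
  set S := {l : Dual ℝ V | (∀ w ∈ Submodule.span ℤ (range b), ∃ n : ℤ, l w = n) ∧
      ∀ i, |l (b i)| ≤ B i}
  have hround : ∀ l ∈ S, ∀ i, (round (l (b i)) : ℝ) = l (b i) := fun l hl i => by
    obtain ⟨n, hn⟩ := hl.1 _ (Submodule.subset_span ⟨i, rfl⟩)
    rw [hn, round_intCast]
  refine Finite.of_injOn (f := fun l i => round (l (b i)))
    (t := Icc (fun i => -⌈B i⌉) (fun i => ⌈B i⌉)) (fun l hl => ?_) (fun l₁ h₁ l₂ h₂ h => ?_)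
    (finite_Icc _ _)
  · have hbound (i : ι) : |(round (l (b i)) : ℝ)| ≤ ⌈B i⌉ := by
      rw [hround l hl i]
      exact (hl.2 i).trans (Int.le_ceil _)
    refine ⟨fun i => ?_, fun i => ?_⟩
    · exact_mod_cast (abs_le.1 (hbound i)).1
    · exact_mod_cast (abs_le.1 (hbound i)).2
  · exact b.ext fun i => by rw [← hround l₁ h₁ i, ← hround l₂ h₂ i]; exact_mod_cast congrFun h i

lemma finite_setOf_dualLattice_dualCone_apply_le (b : Basis ι ℝ V) {C : Set V} {v : V}
    {r : ℝ} (hr : 0 < r) (hv : closedBall v r ⊆ C) (c : ℝ) :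
    {l : Dual ℝ V | (∀ x ∈ C, 0 ≤ l x) ∧
      (∀ w ∈ Submodule.span ℤ (range b), ∃ n : ℤ, l w = n) ∧ l v ≤ c}.Finite := by
  refine (finite_setOf_dualLattice_of_abs_apply_le b fun i => c * ‖b i‖ / r).subset ?_
  rintro l ⟨hlC, hlL, hlv⟩
  refine ⟨hlL, fun i => ?_⟩
  rw [le_div_iff₀ hr]
  exact (abs_apply_mul_le_of_closedBall_subset hlC hr.le hv (b i)).trans (by gcongr)

lemma dense_compl_ker {f : Dual ℝ V} (hf : f ≠ 0) : Dense (LinearMap.ker f : Set V)ᶜ := by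
  rw [← interior_eq_empty_iff_dense_compl, ← not_nonempty_iff_eq_empty]
  exact fun h => hf (LinearMap.ker_eq_top.1 ((LinearMap.ker f).eq_top_of_nonempty_interior' h))

lemma isOpen_dense_biInter_compl_ker [FiniteDimensional ℝ V] {F : Set (Dual ℝ V)}
    (hF : F.Finite) (hF0 : ∀ f ∈ F, f ≠ 0) :
    IsOpen (⋂ f ∈ F, (LinearMap.ker f : Set V)ᶜ) ∧ Dense (⋂ f ∈ F, (LinearMap.ker f : Set V)ᶜ) :=
  have hopen : ∀ f ∈ F, IsOpen (LinearMap.ker f : Set V)ᶜ :=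
    fun f _ => (LinearMap.ker f).closed_of_finiteDimensional.isOpen_compl
  ⟨hF.isOpen_biInter hopen,
    dense_biInter_of_isOpen hopen hF.countable fun f hf => dense_compl_ker (hF0 f hf)⟩

end

theorem stmt_1_general {V : Type*} [NormedAddCommGroup V] [NormedSpace ℝ V]
    {ι : Type*} [Fintype ι] (b : Module.Basis ι ℝ V)
    (C : Set V) (hCopen : IsOpen C) (hCne : C.Nonempty)
    (hCcone : ∀ x ∈ C, ∀ t : ℝ, 0 < t → t • x ∈ C)
    (ξ : Module.Dual ℝ V)
    (hξC : ∀ x ∈ C, x ≠ 0 → 0 < ξ x) :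
    ∃ v, v ∈ C ∧ v ∈ Submodule.span ℤ (Set.range b) ∧
      ∀ lam : Module.Dual ℝ V,
        (∀ x ∈ C, x ≠ 0 → 0 < lam x) →
        (∀ w ∈ Submodule.span ℤ (Set.range b), ∃ n : ℤ, lam w = n) →
        (lam - ξ) v = 0 → lam = ξ := by
  have : FiniteDimensional ℝ V := Module.Finite.of_basis b
  have hnonneg (l : Dual ℝ V) (hl : ∀ x ∈ C, x ≠ 0 → 0 < l x) (x : V) (hx : x ∈ C) : 0 ≤ l x := by
    rcases eq_or_ne x 0 with rfl | hx0
    · simp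
    · exact (hl x hx hx0).le
  obtain ⟨y₁, hy₁, t₁, ht₁, hv₁L⟩ := exists_pos_smul_mem_span_int b hCopen hCne
  obtain ⟨r, hr, hrC⟩ := nhds_basis_closedBall.mem_iff.1 (hCopen.mem_nhds (hCcone _ hy₁ _ ht₁))
  set v₁ := t₁ • y₁
  set G := {l : Dual ℝ V | (∀ x ∈ C, 0 ≤ l x) ∧
    (∀ w ∈ Submodule.span ℤ (range b), ∃ n : ℤ, l w = n) ∧ l v₁ ≤ 3 * ξ v₁}
  have hG : G.Finite := finite_setOf_dualLattice_dualCone_apply_le b hr hrC _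
  obtain ⟨hKopen, hKdense⟩ := isOpen_dense_biInter_compl_ker (hG.sdiff.image (· - ξ))
    (by rintro _ ⟨l, hl, rfl⟩; exact sub_ne_zero.2 hl.2)
  obtain ⟨y, ⟨hy, hyK⟩, t, ht, hvL⟩ := exists_pos_smul_mem_span_int b (isOpen_ball.inter hKopen)
    (hKdense.inter_open_nonempty _ isOpen_ball ⟨v₁, mem_ball_self (half_pos hr)⟩)
  have hyC : y ∈ C := hrC (ball_subset_closedBall (ball_subset_ball (half_le_self hr.le) hy))
  refine ⟨t • y, hCcone y hyC t ht, hvL, fun lam hlamC hlamL hlam => ?_⟩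
  have hlamy : lam y = ξ y := by simpa [ht.ne', sub_eq_zero] using hlam
  have hlamG : lam ∈ G := by
    refine ⟨hnonneg lam hlamC, hlamL, ?_⟩
    have h₁ := abs_le.1 (abs_apply_sub_le_half_of_mem_ball (hnonneg lam hlamC) hrC hy)
    have h₂ := abs_le.1 (abs_apply_sub_le_half_of_mem_ball (hnonneg ξ hξC) hrC hy)
    linarith
  by_contra hne
  exact mem_iInter₂.1 hyK (lam - ξ) ⟨lam, ⟨hlamG, hne⟩, rfl⟩ (by simp [hlamy])

/-- For every dual-lattice point ξ in the dual cone C* of a nonempty open proper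
cone C, there is a lattice point v ∈ C ∩ L such that the affine hyperplane
ξ + v^⊥ meets C* ∩ L* only in ξ. -/
theorem stmt_1 {V : Type*} [NormedAddCommGroup V] [NormedSpace ℝ V]
    {ι : Type*} [Fintype ι] (b : Module.Basis ι ℝ V)
    (C : Set V) (hCopen : IsOpen C) (hCne : C.Nonempty)
    (hCcone : ∀ x ∈ C, ∀ t : ℝ, 0 < t → t • x ∈ C)
    (hproper : ∃ η : Module.Dual ℝ V, ∀ x ∈ C, x ≠ 0 → 0 < η x)
    (ξ : Module.Dual ℝ V)
    (hξC : ∀ x ∈ C, x ≠ 0 → 0 < ξ x)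
    (hξL : ∀ w ∈ Submodule.span ℤ (Set.range b), ∃ n : ℤ, ξ w = n) :
    ∃ v, v ∈ C ∧ v ∈ Submodule.span ℤ (Set.range b) ∧
      ∀ lam : Module.Dual ℝ V,
        (∀ x ∈ C, x ≠ 0 → 0 < lam x) →
        (∀ w ∈ Submodule.span ℤ (Set.range b), ∃ n : ℤ, lam w = n) →
        (lam - ξ) v = 0 → lam = ξ :=
  stmt_1_general b C hCopen hCne hCcone ξ hξC
end

section
/- Let V be a finite-dimensional real vector space with full-rank lattice L and dual lattice L*. Let C be a nonempty open proper cone in V and D an open subcone with closure(D) ⊂ C ∪ {0}. Then for any ξ ∈ V*, the set (C* \ (ξ + closure(D*))) ∩ L* is finite, where C* and D* are the dual cones of C and D respectively. -/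
/-!
Let `λ` lie in the set. Since `λ - ξ` is not in the closure of `D*`, while `λ ∈ C* ⊆ D*`, the
functional `λ - ξ` is negative at some unit vector `u ∈ D`, so `λ u < ‖ξ‖`. The unit vectors of
`closure D` form a compact subset of the open set `C`, hence `u - ε • x₀ ∈ C` for a uniform
`ε > 0`, and `λ ≥ 0` on `C` gives `ε λ x₀ ≤ ‖ξ‖`. As `C` contains a ball of radius `r` around
`x₀`, this bounds `‖λ‖` by `‖ξ‖ / (ε r)`. A functional of bounded norm taking integer values on
a basis has finitely many possibilities.
-/

open Metric Filter Topology

section StrictDualCone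

variable {V : Type*} [NormedAddCommGroup V] [NormedSpace ℝ V]

def strictDualCone (S : Set V) : Set (V →L[ℝ] ℝ) :=
  {μ | ∀ x ∈ S, x ≠ 0 → 0 < μ x}

theorem strictDualCone_anti {S T : Set V} (h : S ⊆ T) :
    strictDualCone T ⊆ strictDualCone S :=
  fun _ hμ x hx hx0 => hμ x (h hx) hx0

theorem nonneg_of_mem_strictDualCone {S : Set V} {μ : V →L[ℝ] ℝ} (hμ : μ ∈ strictDualCone S)
    {x : V} (hx : x ∈ S) : 0 ≤ μ x := by
  rcases eq_or_ne x 0 with rfl | hx0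
  · simp
  · exact (hμ x hx hx0).le

/-- If `μ ≥ 0` on `S`, then `μ = lim_{t → 0⁺} (μ + t • lam)` with every `μ + t • lam` in the
strict dual. -/
theorem exists_neg_of_notMem_closure_strictDualCone {S : Set V} {lam μ : V →L[ℝ] ℝ}
    (hlam : lam ∈ strictDualCone S) (hμ : μ ∉ closure (strictDualCone S)) :
    ∃ x ∈ S, μ x < 0 := by
  by_contra! hnonneg
  refine hμ (mem_closure_of_tendsto (f := fun t : ℝ => μ + t • lam) (b := 𝓝[>] 0) ?_ ?_)
  · have : Tendsto (fun t : ℝ => μ + t • lam) (𝓝 0) (𝓝 (μ + (0 : ℝ) • lam)) :=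
      (continuous_const.add (continuous_id.smul continuous_const)).tendsto 0
    simpa using this.mono_left nhdsWithin_le_nhds
  · filter_upwards [self_mem_nhdsWithin] with t (ht : 0 < t) x hx hx0
    have := hnonneg x hx
    have := hlam x hx hx0
    simp only [add_apply, smul_apply, smul_eq_mul]
    positivity

theorem exists_norm_eq_one_of_notMem_closure_strictDualCone {D : Set V}
    (hDcone : ∀ x ∈ D, ∀ t : ℝ, 0 < t → t • x ∈ D) {lam μ : V →L[ℝ] ℝ}
    (hlam : lam ∈ strictDualCone D) (hμ : μ ∉ closure (strictDualCone D)) :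
    ∃ u ∈ D, ‖u‖ = 1 ∧ μ u < 0 := by
  obtain ⟨x, hxD, hμx⟩ := exists_neg_of_notMem_closure_strictDualCone hlam hμ
  have hx : 0 < ‖x‖ := norm_pos_iff.2 (by rintro rfl; simp at hμx)
  refine ⟨‖x‖⁻¹ • x, hDcone x hxD _ (inv_pos.2 hx), ?_, ?_⟩
  · rw [norm_smul, norm_inv, norm_norm, inv_mul_cancel₀ hx.ne']
  · rw [map_smul, smul_eq_mul]
    exact mul_neg_of_pos_of_neg (inv_pos.2 hx) hμx

theorem exists_pos_sub_smul_mem_of_closure_subset [ProperSpace V] {C D : Set V}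
    (hCopen : IsOpen C) (hclos : closure D ⊆ C ∪ {0}) (x₀ : V) :
    ∃ ε : ℝ, 0 < ε ∧ ∀ u ∈ D, ‖u‖ = 1 → u - ε • x₀ ∈ C := by
  have hK : IsCompact (sphere (0 : V) 1 ∩ closure D) :=
    (isCompact_sphere 0 1).inter_right isClosed_closure
  have hKC : sphere (0 : V) 1 ∩ closure D ⊆ C := by
    rintro z ⟨hz1, hzD⟩
    refine (hclos hzD).resolve_right ?_
    rintro rfl
    simp at hz1
  obtain ⟨δ, hδ, hthick⟩ := hK.exists_cthickening_subset_open hCopen hKC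
  refine ⟨δ / (‖x₀‖ + 1), by positivity, fun u hu hu1 => hthick ?_⟩
  refine mem_cthickening_of_dist_le _ u δ _ ⟨by simpa using hu1, subset_closure hu⟩ ?_
  rw [dist_eq_norm, sub_sub_cancel_left, norm_neg, norm_smul, Real.norm_of_nonneg (by positivity),
    div_mul_eq_mul_div, div_le_iff₀ (by positivity)]
  nlinarith [norm_nonneg x₀]

theorem norm_le_of_nonneg_on_closedBall {C : Set V} {x₀ : V} {r : ℝ} (hr : 0 < r)
    (hball : closedBall x₀ r ⊆ C) {lam : V →L[ℝ] ℝ} (hlam : ∀ z ∈ C, 0 ≤ lam z) :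
    ‖lam‖ ≤ lam x₀ / r := by
  refine ContinuousLinearMap.opNorm_bound_of_ball_bound hr _ lam fun y hy => ?_
  have hy' : ‖y‖ ≤ r := by simpa using hy
  have hadd := hlam _ (hball (by simpa [dist_eq_norm] using hy' : x₀ + y ∈ _))
  have hsub := hlam _ (hball (by simpa [dist_eq_norm, norm_sub_rev] using hy' : x₀ - y ∈ _))
  rw [map_add] at hadd
  rw [map_sub] at hsub
  rw [Real.norm_eq_abs, abs_le]
  constructor <;> linarith

theorem norm_le_of_mem_strictDualCone {C D : Set V} (hDcone : ∀ x ∈ D, ∀ t : ℝ, 0 < t → t • x ∈ D)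
    (hDC : D ⊆ C) {x₀ : V} {r ε : ℝ} (hr : 0 < r) (hball : closedBall x₀ r ⊆ C) (hε : 0 < ε)
    (hmargin : ∀ u ∈ D, ‖u‖ = 1 → u - ε • x₀ ∈ C) {ξ lam : V →L[ℝ] ℝ}
    (hlamC : lam ∈ strictDualCone C) (hlamD : lam - ξ ∉ closure (strictDualCone D)) :
    ‖lam‖ ≤ ‖ξ‖ / (ε * r) := by
  have hnonneg : ∀ z ∈ C, 0 ≤ lam z := fun z hz => nonneg_of_mem_strictDualCone hlamC hz
  obtain ⟨u, huD, hu1, hlt⟩ := exists_norm_eq_one_of_notMem_closure_strictDualCone hDcone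
    (strictDualCone_anti hDC hlamC) hlamD
  have hξu : ξ u ≤ ‖ξ‖ := by
    simpa [hu1] using (le_abs_self _).trans (ξ.le_opNorm u)
  have hshift := hnonneg _ (hmargin u huD hu1)
  rw [map_sub, map_smul, smul_eq_mul] at hshift
  rw [sub_apply, sub_neg] at hlt
  calc ‖lam‖ ≤ lam x₀ / r := norm_le_of_nonneg_on_closedBall hr hball hnonneg
    _ ≤ ‖ξ‖ / ε / r := by
      gcongr
      rw [le_div_iff₀ hε]
      linarith
    _ = ‖ξ‖ / (ε * r) := div_div _ _ _

end StrictDualCone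

theorem finite_integral_on_basis_of_norm_le {V : Type*} [NormedAddCommGroup V] [NormedSpace ℝ V]
    {ι : Type*} [Fintype ι] (b : Module.Basis ι ℝ V) (R : ℝ) :
    Set.Finite {lam : V →L[ℝ] ℝ | ‖lam‖ ≤ R ∧ ∀ i, ∃ n : ℤ, lam (b i) = n} := by
  set N : ι → ℤ := fun i => ⌈R * ‖b i‖⌉
  have hfin : (Set.univ.pi fun i => ((↑) '' Set.Icc (-N i) (N i) : Set ℝ)).Finite :=
    Set.Finite.pi fun i => (Set.finite_Icc _ _).image _
  have hinj : Function.Injective fun (lam : V →L[ℝ] ℝ) i => lam (b i) :=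
    fun lam μ h => ContinuousLinearMap.coe_injective (b.ext fun i => congrFun h i)
  refine (hfin.preimage hinj.injOn).subset ?_
  rintro lam ⟨hnorm, hint⟩ i -
  obtain ⟨n, hn⟩ := hint i
  refine ⟨n, Set.mem_Icc.2 (abs_le.1 ?_), hn.symm⟩
  have : (|n| : ℝ) ≤ N i := by
    calc (|n| : ℝ) = |lam (b i)| := by rw [hn]
      _ ≤ ‖lam‖ * ‖b i‖ := lam.le_opNorm (b i)
      _ ≤ R * ‖b i‖ := by gcongr
      _ ≤ N i := Int.le_ceil _
  exact_mod_cast this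

theorem stmt_2_general {V : Type*} [NormedAddCommGroup V] [NormedSpace ℝ V]
    {ι : Type*} [Fintype ι] (b : Module.Basis ι ℝ V)
    (C D : Set V) (hCopen : IsOpen C) (hCne : C.Nonempty)
    (hDcone : ∀ x ∈ D, ∀ t : ℝ, 0 < t → t • x ∈ D)
    (hDC : D ⊆ C) (hclos : closure D ⊆ C ∪ {0})
    (ξ : V →L[ℝ] ℝ) :
    Set.Finite {lam : V →L[ℝ] ℝ |
      (∀ x ∈ C, x ≠ 0 → 0 < lam x) ∧
      lam - ξ ∉ closure {μ : V →L[ℝ] ℝ | ∀ x ∈ D, x ≠ 0 → 0 < μ x} ∧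
      (∀ w ∈ Submodule.span ℤ (Set.range b), ∃ n : ℤ, lam w = n)} := by
  have : FiniteDimensional ℝ V := Module.Finite.of_basis b
  obtain ⟨x₀, hx₀⟩ := hCne
  obtain ⟨r, hr, hball⟩ := nhds_basis_closedBall.mem_iff.1 (hCopen.mem_nhds hx₀)
  obtain ⟨ε, hε, hmargin⟩ := exists_pos_sub_smul_mem_of_closure_subset hCopen hclos x₀
  refine (finite_integral_on_basis_of_norm_le b (‖ξ‖ / (ε * r))).subset ?_
  rintro lam ⟨hlamC, hlamD, hint⟩
  exact ⟨norm_le_of_mem_strictDualCone hDcone hDC hr hball hε hmargin hlamC hlamD,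
    fun i => hint (b i) (Submodule.subset_span ⟨i, rfl⟩)⟩

/-- If C is a nonempty open proper cone and D an open subcone with closure D ⊆ C ∪ {0},
then for any ξ the set (C* \ (ξ + closure D*)) ∩ L* is finite. -/
theorem stmt_2 {V : Type*} [NormedAddCommGroup V] [NormedSpace ℝ V]
    {ι : Type*} [Fintype ι] (b : Module.Basis ι ℝ V)
    (C D : Set V) (hCopen : IsOpen C) (hCne : C.Nonempty)
    (hCcone : ∀ x ∈ C, ∀ t : ℝ, 0 < t → t • x ∈ C)
    (hproper : ∃ η : V →L[ℝ] ℝ, ∀ x ∈ C, x ≠ 0 → 0 < η x)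
    (hDopen : IsOpen D) (hDne : D.Nonempty)
    (hDcone : ∀ x ∈ D, ∀ t : ℝ, 0 < t → t • x ∈ D)
    (hDC : D ⊆ C) (hclos : closure D ⊆ C ∪ {0})
    (ξ : V →L[ℝ] ℝ) :
    Set.Finite {lam : V →L[ℝ] ℝ |
      (∀ x ∈ C, x ≠ 0 → 0 < lam x) ∧
      lam - ξ ∉ closure {μ : V →L[ℝ] ℝ | ∀ x ∈ D, x ≠ 0 → 0 < μ x} ∧
      (∀ w ∈ Submodule.span ℤ (Set.range b), ∃ n : ℤ, lam w = n)} :=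
  stmt_2_general b C D hCopen hCne hDcone hDC hclos ξ
end
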